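/- Let d ≥ 2 and 1 ≤ m ≤ d be integers and let (ξ_j)_{j≥0} be any sequence with each ξ_j an m-tuple of unit vectors in ℝ^d. For the set K = {0} ∪ ⋃_{j≥0} D_j there exists a constant C > 0 such that N(B(x,R) ∩ K, r) ≤ C·(R/r)^m for all x ∈ K and all 0 < r < R. In particular, the Assouad dimension of K is at most m. -/

import Mathlib

open Metric Set

/-- `P` is an arithmetic patch of size `k` and scale `Δ` with orientation `e : Fin m → ℝ^d`. -/
def IsAPatch {d : ℕ} (m k : ℕ) (Δ : ℝ) (e : Fin m → EuclideanSpace ℝ (Fin d))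
    (P : Set (EuclideanSpace ℝ (Fin d))) : Prop :=
  ∃ t : EuclideanSpace ℝ (Fin d),
    P = {p | ∃ x : Fin m → Fin k, p = t + Δ • ∑ i, ((x i : ℕ) : ℝ) • e i}

/-- `Q` is a `(k, ε, {e₁,…,eₘ})`-AP with approximating arithmetic patch of scale `Δ`. -/
def IsAPScale {d : ℕ} (m k : ℕ) (ε Δ : ℝ) (e : Fin m → EuclideanSpace ℝ (Fin d))
    (Q : Set (EuclideanSpace ℝ (Fin d))) : Prop :=
  0 < Δ ∧ ∃ P : Set (EuclideanSpace ℝ (Fin d)), IsAPatch m k Δ e P ∧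
    Q.ncard = P.ncard ∧ ∀ x ∈ P, Metric.infDist x Q ≤ ε * Δ

/-- `Q` is a `(k, ε, {e₁,…,eₘ})`-AP. -/
def IsAP {d : ℕ} (m k : ℕ) (ε : ℝ) (e : Fin m → EuclideanSpace ℝ (Fin d))
    (Q : Set (EuclideanSpace ℝ (Fin d))) : Prop :=
  ∃ Δ : ℝ, IsAPScale m k ε Δ e Q

/-- `N(E, r)`: the smallest number of open sets of diameter at most `r` needed to cover `E`. -/
noncomputable def coverNumber {X : Type*} [MetricSpace X] (E : Set X) (r : ℝ) : ℕ :=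
  sInf {n : ℕ | ∃ 𝒰 : Finset (Set X), 𝒰.card = n ∧
    (∀ U ∈ 𝒰, IsOpen U ∧ Metric.diam U ≤ r) ∧ E ⊆ ⋃₀ ↑𝒰}

/-- The Assouad dimension of `F`. -/
noncomputable def assouadDim {X : Type*} [MetricSpace X] (F : Set X) : ℝ :=
  sInf {σ : ℝ | 0 ≤ σ ∧ ∃ C > 0, ∀ x ∈ F, ∀ R > 0, ∀ r ∈ Set.Ioo 0 R,
    (coverNumber (Metric.closedBall x R ∩ F) r : ℝ) ≤ C * (R / r) ^ σ}

/-- `ℓ({e₁,…,eₘ})`: the minimum of `‖ω₁e₁ + ⋯ + ωₘeₘ‖` over `ω ∈ {0,1}^m \ {0}`. -/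
noncomputable def ellOf {d m : ℕ} (e : Fin m → EuclideanSpace ℝ (Fin d)) : ℝ :=
  sInf {l : ℝ | ∃ ω : Fin m → Bool, ω ≠ (fun _ => false) ∧
    l = ‖∑ i, if ω i then e i else (0 : EuclideanSpace ℝ (Fin d))‖}

/-- `F` asymptotically and omnidirectionally contains arithmetic progressions. -/
def AsympOmniContainsAPs {d : ℕ} (F : Set (EuclideanSpace ℝ (Fin d))) : Prop :=
  ∀ k : ℕ, 3 ≤ k → ∀ ε ∈ Set.Ioo (0 : ℝ) 1, ∀ e : EuclideanSpace ℝ (Fin d), ‖e‖ = 1 →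
    ∃ Q ⊆ F, IsAP 1 k ε (fun _ => e) Q

/-- The first standard basis vector `e₁ = (1,0,…,0)` of `ℝ^d`. -/
noncomputable def stdE₁ (d : ℕ) : EuclideanSpace ℝ (Fin d) :=
  (EuclideanSpace.equiv (Fin d) ℝ).symm (fun i => if (i : ℕ) = 0 then 1 else 0)

/-- The segment `T_j = {t ξ_j + 2⁻ʲ e₁ : t ∈ [-2^{-(j+2)}, 2^{-(j+2)}]}`. -/
noncomputable def Tseg {d : ℕ} (ξ : ℕ → EuclideanSpace ℝ (Fin d)) (j : ℕ) :
    Set (EuclideanSpace ℝ (Fin d)) :=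
  (fun t : ℝ => t • ξ j + ((1 : ℝ) / 2 ^ j) • stdE₁ d) ''
    Set.Icc (-((1 : ℝ) / 2 ^ (j + 2))) ((1 : ℝ) / 2 ^ (j + 2))

/-- `K = {0} ∪ ⋃_j T_j`. -/
noncomputable def Kset {d : ℕ} (ξ : ℕ → EuclideanSpace ℝ (Fin d)) :
    Set (EuclideanSpace ℝ (Fin d)) :=
  {0} ∪ ⋃ j : ℕ, Tseg ξ j

/-- The diamond `D_j = {t₁ξ_{1j} + ⋯ + tₘξ_{mj} + 2⁻ʲ e₁ : tᵢ ∈ [-1/(m 2^{j+2}), 1/(m 2^{j+2})]}`. -/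
noncomputable def Dcell {d : ℕ} (m : ℕ) (ξ : ℕ → Fin m → EuclideanSpace ℝ (Fin d)) (j : ℕ) :
    Set (EuclideanSpace ℝ (Fin d)) :=
  (fun t : Fin m → ℝ => (∑ i, t i • ξ j i) + ((1 : ℝ) / 2 ^ j) • stdE₁ d) ''
    {t | ∀ i, t i ∈ Set.Icc (-(1 / ((m : ℝ) * 2 ^ (j + 2)))) (1 / ((m : ℝ) * 2 ^ (j + 2)))}

/-- `K = {0} ∪ ⋃_j D_j`. -/
noncomputable def KsetD {d : ℕ} (m : ℕ) (ξ : ℕ → Fin m → EuclideanSpace ℝ (Fin d)) :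
    Set (EuclideanSpace ℝ (Fin d)) :=
  {0} ∪ ⋃ j : ℕ, Dcell m ξ j

/-!
Each diamond `D_j` lies in an affine ball of dimension at most `m` and radius `2⁻ʲ/4` about
`2⁻ʲ e₁`, and such a ball of radius `ρ ≥ r` is covered by `O((ρ / r)^m)` sets of diameter `r`
(balls about a cubical grid). Given `r < R`, the diamonds with `2⁻ʲ ≤ r` all lie in
`closedBall 0 (2r)`, which costs a constant; those with `r < 2⁻ʲ ≤ 16R` are covered whole, at a
total cost `∑ (2⁻ʲ / r)^m = O((R / r)^m)` since `m ≥ 1` makes this a geometric series; and the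
diamonds with `2⁻ʲ > 16R` are more than `2R` apart, so `closedBall x R` meets at most one of
them, inside an `m`-dimensional ball of radius `2R`.
-/

open Module

section Covering

variable {X : Type*} [MetricSpace X]

/-- Explicit covers rather than `coverNumber`, which is `sInf ∅ = 0` on sets without a finite
cover and so is not subadditive in general. -/
def CoverableBy (A : Set X) (r c : ℝ) : Prop :=
  ∃ 𝒰 : Finset (Set X), (𝒰.card : ℝ) ≤ c ∧ (∀ U ∈ 𝒰, IsOpen U ∧ diam U ≤ r) ∧ A ⊆ ⋃₀ ↑𝒰

namespace CoverableBy

variable {A B : Set X} {r c c' : ℝ}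

theorem coverNumber_le (h : CoverableBy A r c) : (coverNumber A r : ℝ) ≤ c := by
  obtain ⟨𝒰, h𝒰, hU, hA⟩ := h
  have hN : coverNumber A r ≤ 𝒰.card := Nat.sInf_le ⟨𝒰, rfl, hU, hA⟩
  exact (Nat.cast_le.2 hN).trans h𝒰

theorem mono (h : CoverableBy B r c) (hAB : A ⊆ B) (hc : c ≤ c') : CoverableBy A r c' :=
  let ⟨𝒰, h𝒰, hU, hB⟩ := h
  ⟨𝒰, h𝒰.trans hc, hU, hAB.trans hB⟩

theorem empty (hc : 0 ≤ c) : CoverableBy (∅ : Set X) r c :=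
  ⟨∅, by simpa using hc, by simp, empty_subset _⟩

theorem union (hA : CoverableBy A r c) (hB : CoverableBy B r c') :
    CoverableBy (A ∪ B) r (c + c') := by
  classical
  obtain ⟨𝒰, h𝒰, hU, hA⟩ := hA
  obtain ⟨𝒱, h𝒱, hV, hB⟩ := hB
  refine ⟨𝒰 ∪ 𝒱, ?_, ?_, ?_⟩
  · calc ((𝒰 ∪ 𝒱).card : ℝ) ≤ 𝒰.card + 𝒱.card := by exact_mod_cast Finset.card_union_le 𝒰 𝒱
      _ ≤ c + c' := add_le_add h𝒰 h𝒱
  · intro U hU'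
    rcases Finset.mem_union.1 hU' with h | h
    exacts [hU U h, hV U h]
  · rw [Finset.coe_union, sUnion_union]
    exact union_subset_union hA hB

theorem biUnion {ι : Type*} (s : Finset ι) {A : ι → Set X} {c : ι → ℝ}
    (h : ∀ i ∈ s, CoverableBy (A i) r (c i)) :
    CoverableBy (⋃ i ∈ s, A i) r (∑ i ∈ s, c i) := by
  classical
  induction s using Finset.induction_on with
  | empty => simpa using empty (X := X) (r := r) le_rfl
  | insert i s hi ih =>
    rw [Finset.set_biUnion_insert, Finset.sum_insert hi]
    exact (h i (s.mem_insert_self i)).union (ih fun k hk => h k (Finset.mem_insert_of_mem hk))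

theorem biUnion_of_subsingleton {ι : Type*} {S : Set ι} {A : ι → Set X}
    (h : ∀ i ∈ S, CoverableBy (A i) r c) (hc : 0 ≤ c)
    (hS : ∀ i ∈ S, ∀ i' ∈ S, (A i).Nonempty → (A i').Nonempty → i = i') :
    CoverableBy (⋃ i ∈ S, A i) r c := by
  by_cases hne : ∃ i ∈ S, (A i).Nonempty
  · obtain ⟨i, hi, hAi⟩ := hne
    refine (h i hi).mono (iUnion₂_subset fun i' hi' p hp => ?_) le_rfl
    rwa [hS i hi i' hi' hAi ⟨p, hp⟩]
  · push Not at hne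
    refine (empty hc).mono (iUnion₂_subset fun i hi => ?_) le_rfl
    rw [hne i hi]

theorem of_subset_biUnion_ball {ι : Type*} (T : Finset ι) (center : ι → X) (hr : 0 ≤ r)
    (hA : A ⊆ ⋃ i ∈ T, ball (center i) (r / 2)) : CoverableBy A r T.card := by
  classical
  refine ⟨T.image fun i => ball (center i) (r / 2), by exact_mod_cast Finset.card_image_le,
    ?_, ?_⟩
  · simp only [Finset.mem_image, forall_exists_index, and_imp, forall_apply_eq_imp_iff₂]
    exact fun i _ => ⟨isOpen_ball, (diam_ball (by positivity)).trans_eq (by ring)⟩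
  · simpa [sUnion_image] using hA

end CoverableBy

theorem assouadDim_le_of_coverNumber_le {F : Set X} {σ C : ℝ} (hσ : 0 ≤ σ) (hC : 0 < C)
    (h : ∀ x ∈ F, ∀ R > 0, ∀ r ∈ Ioo 0 R,
      (coverNumber (closedBall x R ∩ F) r : ℝ) ≤ C * (R / r) ^ σ) :
    assouadDim F ≤ σ :=
  csInf_le ⟨0, fun _ hσ' => hσ'.1⟩ ⟨hσ, C, hC, h⟩

end Covering

section Subspace

variable {E : Type*} [NormedAddCommGroup E] [InnerProductSpace ℝ E]

theorem EuclideanSpace.norm_le_sum_norm {ι : Type*} [Fintype ι] (v : EuclideanSpace ℝ ι) :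
    ‖v‖ ≤ ∑ i, ‖v i‖ := by
  conv_lhs => rw [← (EuclideanSpace.basisFun ι ℝ).sum_repr v]
  refine (norm_sum_le _ _).trans_eq ?_
  simp [norm_smul]

/-- The witness rounds every coordinate of `y / s` to the nearest integer. -/
theorem EuclideanSpace.exists_int_near {n : ℕ} (y : EuclideanSpace ℝ (Fin n)) {s : ℝ}
    (hs : 0 < s) :
    ∃ z : Fin n → ℤ, (∀ i, (|z i| : ℝ) ≤ ‖y‖ / s + 1 / 2) ∧
      ‖y - WithLp.toLp 2 (fun i => (z i : ℝ) * s)‖ ≤ n * (s / 2) := by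
  refine ⟨fun i => round (y i / s), fun i => ?_, ?_⟩
  · have hround := abs_sub_round (y i / s)
    have hyi : |y i / s| ≤ ‖y‖ / s := by
      rw [abs_div, abs_of_pos hs]
      exact div_le_div_of_nonneg_right (PiLp.norm_apply_le y i) hs.le
    have := abs_sub_abs_le_abs_sub (round (y i / s) : ℝ) (y i / s)
    rw [abs_sub_comm] at this
    linarith
  · refine (EuclideanSpace.norm_le_sum_norm _).trans ?_
    calc ∑ i, ‖(y - WithLp.toLp 2 (fun i => (round (y i / s) : ℝ) * s)) i‖
        = ∑ i, |y i / s - round (y i / s)| * s := by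
          refine Finset.sum_congr rfl fun i _ => ?_
          rw [PiLp.sub_apply, Real.norm_eq_abs, ← abs_of_pos hs, ← abs_mul, abs_of_pos hs,
            sub_mul, div_mul_cancel₀ _ hs.ne']
      _ ≤ ∑ _i : Fin n, 1 / 2 * s :=
          Finset.sum_le_sum fun i _ => mul_le_mul_of_nonneg_right (abs_sub_round _) hs.le
      _ = n * (s / 2) := by
          rw [Finset.sum_const, Finset.card_univ, Fintype.card_fin, nsmul_eq_mul]; ring

theorem closedBall_inter_submodule_subset_biUnion_ball {V : Submodule ℝ E} {k : ℕ}
    (b : OrthonormalBasis (Fin k) ℝ V) (q : E) {ρ r s : ℝ} (hs : 0 < s) (hks : k * s < r) :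
    closedBall q ρ ∩ {p | p - q ∈ V} ⊆
      ⋃ z ∈ Fintype.piFinset fun _ : Fin k => Finset.Icc (-⌊ρ / s + 1 / 2⌋) ⌊ρ / s + 1 / 2⌋,
        ball (q + b.repr.symm (WithLp.toLp 2 fun i => (z i : ℝ) * s)) (r / 2) := by
  rintro p ⟨hpρ, hpV⟩
  let w : V := ⟨p - q, hpV⟩
  have hw : ‖b.repr w‖ ≤ ρ := by
    rw [LinearIsometryEquiv.norm_map]
    exact (dist_eq_norm p q).symm.trans_le hpρ
  obtain ⟨z, hzM, hz⟩ := EuclideanSpace.exists_int_near (b.repr w) hs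
  refine mem_iUnion₂.2 ⟨z, Fintype.mem_piFinset.2 fun i => ?_, ?_⟩
  · rw [Finset.mem_Icc, ← abs_le, Int.le_floor, Int.cast_abs]
    exact (hzM i).trans (by gcongr)
  · let g := b.repr.symm (WithLp.toLp 2 fun i => (z i : ℝ) * s)
    have hdist : p - (q + g) = ((w - g : V) : E) := by
      simp only [w, Submodule.coe_sub]
      abel
    rw [mem_ball, dist_eq_norm, hdist, Submodule.norm_coe, ← b.repr.norm_map, map_sub,
      LinearIsometryEquiv.apply_symm_apply]
    linarith

theorem card_piFinset_Icc_neg (k : ℕ) {M : ℤ} (hM : 0 ≤ M) :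
    ((Fintype.piFinset fun _ : Fin k => Finset.Icc (-M) M).card : ℝ) = (2 * M + 1) ^ k := by
  rw [Fintype.card_piFinset, Finset.prod_const, Finset.card_univ, Fintype.card_fin, Int.card_Icc,
    show M + 1 - -M = 2 * M + 1 by ring, Nat.cast_pow, ← Int.cast_natCast,
    Int.toNat_of_nonneg (by omega)]
  norm_cast

/-- Balls of radius `r / 2` around the points of a cubical grid of mesh `r / (dim V + 1)`. -/
theorem coverableBy_closedBall_inter_submodule (V : Submodule ℝ E) [FiniteDimensional ℝ V]
    {n : ℕ} (hV : finrank ℝ V ≤ n) (q : E) {r ρ : ℝ} (hr : 0 < r) (hrρ : r ≤ ρ) :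
    CoverableBy (closedBall q ρ ∩ {p | p - q ∈ V}) r (((2 * n + 4) * (ρ / r)) ^ n) := by
  set k := finrank ℝ V
  set s : ℝ := r / (k + 1) with hs_def
  have hs : 0 < s := by positivity
  have hks : k * s < r := by
    rw [hs_def, mul_div_assoc', div_lt_iff₀ (by positivity)]
    linarith
  have hρ : 0 < ρ := hr.trans_le hrρ
  set M : ℤ := ⌊ρ / s + 1 / 2⌋
  have hM : 0 ≤ M := Int.floor_nonneg.2 (by positivity)
  refine (CoverableBy.of_subset_biUnion_ball _ _ hr.le
    (closedBall_inter_submodule_subset_biUnion_ball (stdOrthonormalBasis ℝ V) q hs hks)).mono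
    subset_rfl ?_
  rw [card_piFinset_Icc_neg k hM]
  have hρr : (1 : ℝ) ≤ ρ / r := (one_le_div hr).2 hrρ
  have hkn : (k : ℝ) ≤ n := by exact_mod_cast hV
  have hbase : (2 * M + 1 : ℝ) ≤ (2 * n + 4) * (ρ / r) := by
    have hMle : (M : ℝ) ≤ ρ / s + 1 / 2 := Int.floor_le _
    have hρs : ρ / s = (k + 1) * (ρ / r) := by
      rw [hs_def]
      field_simp
    nlinarith
  calc (2 * M + 1 : ℝ) ^ k ≤ ((2 * n + 4) * (ρ / r)) ^ k := by gcongr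
    _ ≤ ((2 * n + 4) * (ρ / r)) ^ n := pow_le_pow_right₀ (by nlinarith) hV

end Subspace

section Diamonds

variable {d m : ℕ} {ξ : ℕ → Fin m → EuclideanSpace ℝ (Fin d)}

theorem norm_stdE₁ (hd : 0 < d) : ‖stdE₁ d‖ = 1 := by
  rw [show stdE₁ d = EuclideanSpace.single ⟨0, hd⟩ 1 by ext i; simp [stdE₁, Fin.ext_iff]]
  simp

theorem Dcell_subset {j : ℕ} (hξ : ∀ i, ‖ξ j i‖ ≤ 1) :
    Dcell m ξ j ⊆ closedBall ((1 / 2 ^ j : ℝ) • stdE₁ d) (1 / 2 ^ (j + 2)) ∩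
      {p | p - (1 / 2 ^ j : ℝ) • stdE₁ d ∈ Submodule.span ℝ (range (ξ j))} := by
  rintro _ ⟨t, ht, rfl⟩
  simp only [mem_inter_iff, mem_closedBall, dist_eq_norm, mem_ofPred_eq, add_sub_cancel_right]
  refine ⟨?_, Submodule.sum_mem _ fun i _ =>
    Submodule.smul_mem _ _ (Submodule.subset_span ⟨i, rfl⟩)⟩
  calc ‖∑ i, t i • ξ j i‖ ≤ ∑ i, |t i| := by
        refine (norm_sum_le _ _).trans (Finset.sum_le_sum fun i _ => ?_)
        rw [norm_smul, Real.norm_eq_abs]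
        exact mul_le_of_le_one_right (abs_nonneg _) (hξ i)
    _ ≤ ∑ _i : Fin m, (1 / (m * 2 ^ (j + 2)) : ℝ) := Finset.sum_le_sum fun i _ => abs_le.2 (ht i)
    _ ≤ 1 / 2 ^ (j + 2) := by
        rw [Finset.sum_const, Finset.card_univ, Fintype.card_fin, nsmul_eq_mul]
        rcases Nat.eq_zero_or_pos m with rfl | hm
        · simp only [CharP.cast_eq_zero, zero_mul]; positivity
        · rw [mul_one_div, div_mul_cancel_left₀ (by positivity), one_div]

theorem norm_mem_Icc_of_mem_Dcell (hd : 0 < d) {j : ℕ} (hξ : ∀ i, ‖ξ j i‖ ≤ 1)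
    {p : EuclideanSpace ℝ (Fin d)} (hp : p ∈ Dcell m ξ j) :
    ‖p‖ ∈ Icc (3 / 4 * (1 / 2 ^ j)) (5 / 4 * (1 / 2 ^ j)) := by
  have hpc := (Dcell_subset hξ hp).1
  rw [mem_closedBall, dist_eq_norm] at hpc
  have hc : ‖(1 / 2 ^ j : ℝ) • stdE₁ d‖ = 1 / 2 ^ j := by
    rw [norm_smul, norm_stdE₁ hd, mul_one, Real.norm_of_nonneg (by positivity)]
  have hj : (1 / 2 ^ (j + 2) : ℝ) = 1 / 4 * (1 / 2 ^ j) := by ring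
  have := abs_le.1 ((abs_norm_sub_norm_le _ _).trans hpc)
  rw [hc, hj] at this
  constructor <;> linarith

theorem le_dist_of_mem_Dcell (hd : 0 < d) (hξ : ∀ j i, ‖ξ j i‖ ≤ 1) {j j' : ℕ}
    (hjj' : j < j') {p p' : EuclideanSpace ℝ (Fin d)} (hp : p ∈ Dcell m ξ j)
    (hp' : p' ∈ Dcell m ξ j') : 1 / 2 ^ j / 8 ≤ dist p p' := by
  have h := (norm_mem_Icc_of_mem_Dcell hd (hξ j) hp).1
  have h' := (norm_mem_Icc_of_mem_Dcell hd (hξ j') hp').2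
  have hjj : (1 / 2 ^ j' : ℝ) ≤ 1 / 2 * (1 / 2 ^ j) := by
    calc (1 / 2 ^ j' : ℝ) ≤ 1 / 2 ^ (j + 1) := one_div_pow_le_one_div_pow_of_le one_le_two hjj'
      _ = 1 / 2 * (1 / 2 ^ j) := by ring
  rw [dist_eq_norm]
  linarith [norm_sub_norm_le p p']

theorem eq_of_Dcell_inter_closedBall_nonempty (hd : 0 < d) (hξ : ∀ j i, ‖ξ j i‖ ≤ 1)
    {x : EuclideanSpace ℝ (Fin d)} {R : ℝ} {j j' : ℕ} (hj : 16 * R < 1 / 2 ^ j)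
    (hj' : 16 * R < 1 / 2 ^ j') (h : (Dcell m ξ j ∩ closedBall x R).Nonempty)
    (h' : (Dcell m ξ j' ∩ closedBall x R).Nonempty) : j = j' := by
  wlog hle : j ≤ j' generalizing j j'
  · exact (this hj' hj h' h (le_of_not_ge hle)).symm
  refine hle.eq_or_lt.resolve_right fun hlt => ?_
  obtain ⟨p, hp, hpx⟩ := h
  obtain ⟨p', hp', hp'x⟩ := h'
  have := (le_dist_of_mem_Dcell hd hξ hlt hp hp').trans (dist_triangle_right p p' x)
  rw [mem_closedBall] at hpx hp'x
  linarith

theorem coverableBy_Dcell {j : ℕ} (hξ : ∀ i, ‖ξ j i‖ ≤ 1) {r : ℝ} (hr : 0 < r)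
    (hrj : r ≤ 1 / 2 ^ j) : CoverableBy (Dcell m ξ j) r (((2 * m + 4) * (1 / 2 ^ j / r)) ^ m) :=
  (coverableBy_closedBall_inter_submodule _ ((finrank_range_le_card (ξ j)).trans_eq
    (Fintype.card_fin m)) _ hr hrj).mono
    ((Dcell_subset hξ).trans (inter_subset_inter_left _ (closedBall_subset_closedBall
      (one_div_pow_le_one_div_pow_of_le one_le_two (by omega))))) le_rfl

theorem coverableBy_Dcell_inter_closedBall {j : ℕ} (hξ : ∀ i, ‖ξ j i‖ ≤ 1)
    (x : EuclideanSpace ℝ (Fin d)) {r R : ℝ} (hr : 0 < r) (hrR : r ≤ 2 * R) :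
    CoverableBy (Dcell m ξ j ∩ closedBall x R) r (((2 * m + 4) * (2 * R / r)) ^ m) := by
  rcases (Dcell m ξ j ∩ closedBall x R).eq_empty_or_nonempty with h | ⟨q, hqD, hqx⟩
  · rw [h]
    have : 0 ≤ R := by linarith
    exact CoverableBy.empty (by positivity)
  refine (coverableBy_closedBall_inter_submodule _ ((finrank_range_le_card (ξ j)).trans_eq
    (Fintype.card_fin m)) q hr hrR).mono ?_ le_rfl
  rintro p ⟨hpD, hpx⟩
  refine ⟨(dist_triangle_right p q x).trans ?_, ?_⟩
  · rw [mem_closedBall] at hpx hqx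
    linarith
  · have hp : p - (1 / 2 ^ j : ℝ) • stdE₁ d ∈ Submodule.span ℝ (range (ξ j)) :=
      (Dcell_subset hξ hpD).2
    have hq : q - (1 / 2 ^ j : ℝ) • stdE₁ d ∈ Submodule.span ℝ (range (ξ j)) :=
      (Dcell_subset hξ hqD).2
    simpa using Submodule.sub_mem _ hp hq

theorem sum_Ico_one_div_two_pow_pow_le {m : ℕ} (hm : 1 ≤ m) (k n : ℕ) :
    ∑ j ∈ Finset.Ico k n, (1 / 2 ^ j : ℝ) ^ m ≤ 2 * (1 / 2 ^ k) ^ m := by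
  have ht : (1 / 2 : ℝ) ^ m ≤ 1 / 2 := pow_le_of_le_one (by norm_num) (by norm_num) (by omega)
  have hpow : ∀ j, (1 / 2 ^ j : ℝ) ^ m = ((1 / 2) ^ m) ^ j := fun j => by
    rw [← one_div_pow, pow_right_comm]
  simp_rw [hpow]
  calc _ ≤ ((1 / 2 : ℝ) ^ m) ^ k / (1 - (1 / 2) ^ m) :=
        geom_sum_Ico_le_of_lt_one (by positivity) (by linarith)
    _ ≤ 2 * ((1 / 2) ^ m) ^ k := by
        rw [div_le_iff₀ (by linarith)]
        nlinarith [pow_nonneg (pow_nonneg (by norm_num : (0 : ℝ) ≤ 1 / 2) m) k]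

/-- The costs form a geometric series dominated by its first term. -/
theorem coverableBy_biUnion_Ico_Dcell (hm : 1 ≤ m) (hξ : ∀ j i, ‖ξ j i‖ ≤ 1) {r R : ℝ}
    (hr : 0 < r) {k a : ℕ} (hk : 1 / 2 ^ k ≤ 16 * R) (ha : ∀ j < a, r < 1 / 2 ^ j) :
    CoverableBy (⋃ j ∈ Finset.Ico k a, Dcell m ξ j) r
      (2 * (16 * (2 * m + 4)) ^ m * (R / r) ^ m) := by
  refine (CoverableBy.biUnion _ fun j hj => coverableBy_Dcell (hξ j) hr
    (ha j (Finset.mem_Ico.1 hj).2).le).mono subset_rfl ?_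
  calc ∑ j ∈ Finset.Ico k a, ((2 * m + 4) * (1 / 2 ^ j / r)) ^ m
      = ((2 * m + 4) / r) ^ m * ∑ j ∈ Finset.Ico k a, (1 / 2 ^ j : ℝ) ^ m := by
        rw [Finset.mul_sum]
        exact Finset.sum_congr rfl fun j _ => by rw [← mul_pow]; ring
    _ ≤ ((2 * m + 4) / r) ^ m * (2 * (16 * R) ^ m) := by
        gcongr
        exact (sum_Ico_one_div_two_pow_pow_le hm k a).trans (by gcongr)
    _ = 2 * (16 * (2 * m + 4)) ^ m * (R / r) ^ m := by
        rw [div_pow, mul_pow, mul_pow, div_pow]; ring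

theorem coverableBy_biUnion_Iio_Dcell_inter_closedBall (hd : 0 < d) (hξ : ∀ j i, ‖ξ j i‖ ≤ 1)
    (x : EuclideanSpace ℝ (Fin d)) {r R : ℝ} (hr : 0 < r) (hrR : r < R) {k : ℕ}
    (hk : ∀ j < k, 16 * R < 1 / 2 ^ j) :
    CoverableBy (⋃ j ∈ Iio k, Dcell m ξ j ∩ closedBall x R) r
      ((2 * (2 * m + 4)) ^ m * (R / r) ^ m) := by
  have hR : 0 < R := hr.trans hrR
  refine (CoverableBy.biUnion_of_subsingleton
    (fun j _ => coverableBy_Dcell_inter_closedBall (hξ j) x hr (by linarith)) (by positivity)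
    fun j hj j' hj' => eq_of_Dcell_inter_closedBall_nonempty hd hξ (hk j hj) (hk j' hj')).mono
    subset_rfl (le_of_eq ?_)
  rw [← mul_pow]
  ring

theorem closedBall_inter_KsetD_subset (hd : 0 < d) (hξ : ∀ j i, ‖ξ j i‖ ≤ 1)
    (x : EuclideanSpace ℝ (Fin d)) (R : ℝ) {r : ℝ} (hr : 0 ≤ r) {a : ℕ} (ha : 1 / 2 ^ a ≤ r)
    (k : ℕ) :
    closedBall x R ∩ KsetD m ξ ⊆ closedBall 0 (2 * r) ∪ (⋃ j ∈ Finset.Ico k a, Dcell m ξ j) ∪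
      ⋃ j ∈ Iio k, Dcell m ξ j ∩ closedBall x R := by
  rintro p ⟨hpx, hp | hp⟩
  · rw [mem_singleton_iff.1 hp]
    exact Or.inl (Or.inl (mem_closedBall_self (by positivity)))
  obtain ⟨j, hpj⟩ := mem_iUnion.1 hp
  rcases lt_or_ge j k with hjk | hkj
  · exact Or.inr (mem_biUnion hjk ⟨hpj, hpx⟩)
  rcases lt_or_ge j a with hja | haj
  · exact Or.inl (Or.inr (mem_biUnion (Finset.mem_coe.2 (Finset.mem_Ico.2 ⟨hkj, hja⟩)) hpj))
  · refine Or.inl (Or.inl ?_)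
    rw [mem_closedBall, dist_zero_right]
    have hpj := (norm_mem_Icc_of_mem_Dcell hd (hξ j) hpj).2
    have : (1 / 2 ^ j : ℝ) ≤ 1 / 2 ^ a := one_div_pow_le_one_div_pow_of_le one_le_two haj
    linarith

theorem coverableBy_closedBall_inter_KsetD (hm : 1 ≤ m) (hd : 0 < d) (hξ : ∀ j i, ‖ξ j i‖ ≤ 1)
    (x : EuclideanSpace ℝ (Fin d)) {r R : ℝ} (hr : 0 < r) (hrR : r < R) :
    CoverableBy (closedBall x R ∩ KsetD m ξ) r
      (((4 * d + 8) ^ d + 2 * (16 * (2 * m + 4)) ^ m + (2 * (2 * m + 4)) ^ m) * (R / r) ^ m) := by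
  classical
  have hsmall : ∃ a : ℕ, (1 / 2 ^ a : ℝ) ≤ r := by
    obtain ⟨a, ha⟩ := exists_pow_lt_of_lt_one hr (by norm_num : (1 / 2 : ℝ) < 1)
    exact ⟨a, by rw [← one_div_pow]; exact ha.le⟩
  have hlarge : ∃ k : ℕ, (1 / 2 ^ k : ℝ) ≤ 16 * R := by
    obtain ⟨a, ha⟩ := hsmall
    exact ⟨a, by linarith⟩
  have h₀ : CoverableBy (closedBall (0 : EuclideanSpace ℝ (Fin d)) (2 * r)) r ((4 * d + 8) ^ d) :=
    (coverableBy_closedBall_inter_submodule ⊤ (by rw [finrank_top, finrank_euclideanSpace_fin]) 0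
      hr (by linarith)).mono (fun p hp => ⟨hp, trivial⟩) (le_of_eq (by field_simp; ring))
  have h₁ := coverableBy_biUnion_Ico_Dcell hm hξ hr (Nat.find_spec hlarge)
    fun j hj => not_le.1 (Nat.find_min hsmall hj)
  have h₂ := coverableBy_biUnion_Iio_Dcell_inter_closedBall hd hξ x hr hrR
    fun j hj => not_le.1 (Nat.find_min hlarge hj)
  refine ((h₀.union h₁).union h₂).mono
    (closedBall_inter_KsetD_subset hd hξ x R hr.le (Nat.find_spec hsmall) _) ?_
  have hRr : 1 ≤ (R / r) ^ m := one_le_pow₀ ((one_le_div hr).2 hrR.le)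
  nlinarith [pow_nonneg (by positivity : (0 : ℝ) ≤ 4 * d + 8) d]

end Diamonds

theorem KsetD_coverNumber_le_general (d m : ℕ) (hm : 1 ≤ m)
    (ξ : ℕ → Fin m → EuclideanSpace ℝ (Fin d)) (hξ : ∀ j i, ‖ξ j i‖ = 1) :
    (∃ C > (0 : ℝ), ∀ x ∈ KsetD m ξ, ∀ R > (0 : ℝ), ∀ r ∈ Set.Ioo 0 R,
      (coverNumber (Metric.closedBall x R ∩ KsetD m ξ) r : ℝ) ≤ C * (R / r) ^ m) ∧
    assouadDim (KsetD m ξ) ≤ (m : ℝ) := by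
  have hd : 0 < d := Nat.pos_of_ne_zero fun h => by
    subst h
    simpa [Subsingleton.elim (ξ 0 ⟨0, hm⟩) 0] using hξ 0 ⟨0, hm⟩
  set C : ℝ := (4 * d + 8) ^ d + 2 * (16 * (2 * m + 4)) ^ m + (2 * (2 * m + 4)) ^ m
  have hC : 0 < C := by positivity
  have hbound : ∀ x ∈ KsetD m ξ, ∀ R > (0 : ℝ), ∀ r ∈ Set.Ioo 0 R,
      (coverNumber (closedBall x R ∩ KsetD m ξ) r : ℝ) ≤ C * (R / r) ^ m :=
    fun x _ _ _ _ hr => (coverableBy_closedBall_inter_KsetD hm hd (fun j i => (hξ j i).le) x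
      hr.1 hr.2).coverNumber_le
  refine ⟨⟨C, hC, hbound⟩, assouadDim_le_of_coverNumber_le (Nat.cast_nonneg m) hC
    fun x hx R hR r hr => ?_⟩
  rw [Real.rpow_natCast]
  exact hbound x hx R hR r hr

/-- For any sequence `ξ_j` of `m`-tuples of unit vectors in `ℝ^d`, there is
`C > 0` with `N(B(x,R) ∩ K, r) ≤ C·(R/r)^m` for all `x ∈ K` and `0 < r < R`; in
particular `dim_A K ≤ m`, where `K = {0} ∪ ⋃_j D_j`. -/
theorem KsetD_coverNumber_le (d m : ℕ) (hd : 2 ≤ d) (hm : 1 ≤ m) (hmd : m ≤ d)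
    (ξ : ℕ → Fin m → EuclideanSpace ℝ (Fin d)) (hξ : ∀ j i, ‖ξ j i‖ = 1) :
    (∃ C > (0 : ℝ), ∀ x ∈ KsetD m ξ, ∀ R > (0 : ℝ), ∀ r ∈ Set.Ioo 0 R,
      (coverNumber (Metric.closedBall x R ∩ KsetD m ξ) r : ℝ) ≤ C * (R / r) ^ m) ∧
    assouadDim (KsetD m ξ) ≤ (m : ℝ) :=
  KsetD_coverNumber_le_general d m hm ξ hξ
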